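/- arXiv:2310.17886 — 2 statements merged into one kernel-verified Lean document; each statement's English description precedes it below -/
import Mathlib

section
/- There exists an absolute constant c > 0 such that for every real ε > 0 there exists a constant C(ε) > 0 with the following property. For every connected n-vertex graph G = (V, E) with n ≥ 2 and every integer r with 1 ≤ r ≤ n, there exist vertices v_1, …, v_k ∈ V and positive integers r_1, …, r_k with r ≤ r_i ≤ r·n^{c·ε} for each i, such that: (Coverage) every vertex v ∈ V satisfies dist_G(v, v_i) ≤ r_i for some i ∈ {1, …, k}; and (Low Overlap) the sum over i of |B(v_i, 2r_i)| is at most C(ε)·n. -/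
/-!
Each vertex `u` picks a scale `j` at which its ball grows slowly:
`|B(u, 2 r 4^j)| ≤ M |B(u, r 4^j / 2)|` with `M = 4^⌈1/ε⌉`. Such a scale exists with `M^j ≤ n`,
since `r 4^(j+1) / 2 = 2 r 4^j` and otherwise `|B(u, r 4^j / 2)| ≥ M^j` for all `j`;
hence `4^j ≤ n^ε`.
Greedily choosing centers in order of decreasing radius `R u = r 4^(j u)` and discarding what
their balls cover gives a cover whose centers are more than `max (R u) (R w)` apart, so the
half-radius balls are disjoint and the doubled balls have total size at most `M n`.
-/

open SimpleGraph

/-- The ball of radius `ρ` around `v` in `G`. -/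
def gball {V : Type*} (G : SimpleGraph V) (v : V) (ρ : ℕ) : Set V :=
  {u | G.dist v u ≤ ρ}

open Finset

lemma exists_pow_le_and_succ_le_mul {f : ℕ → ℕ} {M N : ℕ} (hM : 2 ≤ M) (hf0 : 0 < f 0)
    (hfN : ∀ j, f j ≤ N) : ∃ j, M ^ j ≤ N ∧ f (j + 1) ≤ M * f j := by
  by_contra! h
  have grow : ∀ j, M ^ j ≤ f j := by
    intro j
    induction j with
    | zero => rwa [pow_zero]
    | succ j ih =>
      calc M ^ (j + 1) = M * M ^ j := pow_succ' M j
        _ ≤ M * f j := Nat.mul_le_mul_left M ih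
        _ ≤ f (j + 1) := (h j (ih.trans (hfN j))).le
  have : N < M ^ N := Nat.lt_two_pow_self.trans_le (Nat.pow_le_pow_left hM N)
  exact (grow N).trans (hfN N) |>.not_gt this

lemma pow_le_rpow_of_pow_pow_le {a j m n : ℕ} {ε : ℝ} (hn : 1 ≤ n) (hm : 0 < m)
    (hmε : (m : ℝ)⁻¹ ≤ ε) (h : (a ^ m) ^ j ≤ n) : (a : ℝ) ^ j ≤ (n : ℝ) ^ ε := calc
  (a : ℝ) ^ j ≤ (n : ℝ) ^ (m : ℝ)⁻¹ := by
    refine (Real.le_rpow_inv_iff_of_pos (by positivity) (by positivity) (by positivity)).2 ?_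
    rw [Real.rpow_natCast, ← pow_mul, mul_comm, pow_mul]
    exact_mod_cast h
  _ ≤ (n : ℝ) ^ ε := Real.rpow_le_rpow_of_exponent_le (by exact_mod_cast hn) hmε

lemma Finset.sum_ncard_le_card_of_pairwiseDisjoint {ι α : Type*} [Finite α] (S : Finset ι)
    {B : ι → Set α} (h : (S : Set ι).PairwiseDisjoint B) :
    ∑ i ∈ S, (B i).ncard ≤ Nat.card α := by
  rw [← finsum_mem_coe_finset,
    ← Set.Finite.ncard_biUnion S.finite_toSet (fun _ _ => Set.toFinite _) h]
  exact Set.ncard_le_card _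

namespace SimpleGraph

variable {V : Type*} (G : SimpleGraph V)

lemma one_le_ncard_gball [Finite V] (v : V) (ρ : ℕ) : 1 ≤ (gball G v ρ).ncard :=
  (Set.ncard_pos (Set.toFinite _)).2 ⟨v, by simp [gball]⟩

lemma Connected.disjoint_gball_of_add_lt_dist {G : SimpleGraph V} (hG : G.Connected)
    {u w : V} {ρ σ : ℕ} (h : ρ + σ < G.dist u w) : Disjoint (gball G u ρ) (gball G w σ) := by
  refine Set.disjoint_left.2 fun x hxu hxw => ?_
  have := hG.dist_triangle (u := u) (v := x) (w := w)
  rw [dist_comm (u := x)] at this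
  change G.dist u x ≤ ρ at hxu
  change G.dist w x ≤ σ at hxw
  omega

lemma exists_separated_cover (R : V → ℕ) (T : Finset V) :
    ∃ S ⊆ T, (∀ x ∈ T, ∃ u ∈ S, G.dist u x ≤ R u) ∧
      ∀ u ∈ S, ∀ w ∈ S, u ≠ w → R w < G.dist u w := by
  classical
  induction T using Finset.strongInduction with
  | H T ih =>
  rcases T.eq_empty_or_nonempty with rfl | hT
  · exact ⟨∅, by simp, by simp, by simp⟩
  -- Greedy step: a center of largest radius, then recurse on what its ball leaves uncovered.
  obtain ⟨u, huT, hmax⟩ := T.exists_max_image R hT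
  set T' := T.filter fun x => R u < G.dist u x
  obtain ⟨S', hS'T', hcov, hsep⟩ := ih T' (filter_ssubset.2 ⟨u, huT, by simp⟩)
  have far : ∀ w ∈ S', R w ≤ R u ∧ R u < G.dist u w := fun w hw =>
    have hw' := mem_filter.1 (hS'T' hw)
    ⟨hmax w hw'.1, hw'.2⟩
  refine ⟨insert u S', insert_subset huT (hS'T'.trans (filter_subset _ _)), ?_, ?_⟩
  · intro x hx
    by_cases hux : G.dist u x ≤ R u
    · exact ⟨u, mem_insert_self u S', hux⟩
    · obtain ⟨w, hw, hwx⟩ := hcov x (mem_filter.2 ⟨hx, not_le.1 hux⟩)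
      exact ⟨w, mem_insert_of_mem hw, hwx⟩
  · simp only [mem_insert]
    rintro a (rfl | ha) b (rfl | hb) hab
    · exact absurd rfl hab
    · exact (far b hb).1.trans_lt (far b hb).2
    · rw [dist_comm]
      exact (far a ha).2
    · exact hsep a ha b hb hab

lemma exists_scale_ncard_gball_le [Finite V] {M : ℕ} (hM : 2 ≤ M) (r : ℕ) (u : V) :
    ∃ j, M ^ j ≤ Nat.card V ∧
      (gball G u (2 * (r * 4 ^ j))).ncard ≤ M * (gball G u (r * 4 ^ j / 2)).ncard := by
  obtain ⟨j, hjV, hj⟩ := exists_pow_le_and_succ_le_mul hM (G.one_le_ncard_gball u (r * 4 ^ 0 / 2))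
    fun j => Set.ncard_le_card (gball G u (r * 4 ^ j / 2))
  have hhalf : r * 4 ^ (j + 1) / 2 = 2 * (r * 4 ^ j) :=
    Nat.div_eq_of_eq_mul_left two_pos (by ring)
  exact ⟨j, hjV, hhalf ▸ hj⟩

lemma Connected.exists_cover_sum_ncard_gball_le [Fintype V] {G : SimpleGraph V}
    (hG : G.Connected) {R : V → ℕ} {M : ℕ}
    (hgrowth : ∀ u, (gball G u (2 * R u)).ncard ≤ M * (gball G u (R u / 2)).ncard) :
    ∃ S : Finset V, (∀ x, ∃ u ∈ S, G.dist u x ≤ R u) ∧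
      ∑ u ∈ S, (gball G u (2 * R u)).ncard ≤ M * Nat.card V := by
  obtain ⟨S, -, hcov, hsep⟩ := G.exists_separated_cover R univ
  have hdisj : (S : Set V).PairwiseDisjoint fun u => gball G u (R u / 2) := by
    intro u hu w hw huw
    have h₁ := hsep u hu w hw huw
    have h₂ := hsep w hw u hu huw.symm
    rw [dist_comm] at h₂
    exact hG.disjoint_gball_of_add_lt_dist (by omega)
  refine ⟨S, fun x => hcov x (mem_univ x), ?_⟩
  calc ∑ u ∈ S, (gball G u (2 * R u)).ncard
      ≤ ∑ u ∈ S, M * (gball G u (R u / 2)).ncard := sum_le_sum fun u _ => hgrowth u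
    _ = M * ∑ u ∈ S, (gball G u (R u / 2)).ncard := (mul_sum S _ M).symm
    _ ≤ M * Nat.card V := Nat.mul_le_mul_left M (S.sum_ncard_le_card_of_pairwiseDisjoint hdisj)

end SimpleGraph

theorem clustering_decomposition :
    ∃ c : ℝ, 0 < c ∧
      ∀ ε : ℝ, 0 < ε → ∃ C : ℝ, 0 < C ∧
        ∀ n : ℕ, 2 ≤ n → ∀ G : SimpleGraph (Fin n), G.Connected →
          ∀ r : ℕ, 1 ≤ r → r ≤ n →
            ∃ (k : ℕ) (v : Fin k → Fin n) (rad : Fin k → ℕ),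
              (∀ i : Fin k, r ≤ rad i ∧ (rad i : ℝ) ≤ (r : ℝ) * (n : ℝ) ^ (c * ε)) ∧
              (∀ u : Fin n, ∃ i : Fin k, G.dist (v i) u ≤ rad i) ∧
              ((∑ i : Fin k, (gball G (v i) (2 * rad i)).ncard : ℕ) : ℝ) ≤ C * n := by
  refine ⟨1, one_pos, fun ε hε => ?_⟩
  set m := ⌈ε⁻¹⌉₊
  have hm : 0 < m := Nat.ceil_pos.2 (inv_pos.2 hε)
  have hM : 2 ≤ 4 ^ m := le_trans (by norm_num) (Nat.pow_le_pow_right (by norm_num) hm)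
  refine ⟨(4 ^ m : ℕ), by positivity, fun n hn G hG r _ _ => ?_⟩
  choose j hjn hgrowth using fun u => G.exists_scale_ncard_gball_le hM r u
  obtain ⟨S, hcov, hsum⟩ := hG.exists_cover_sum_ncard_gball_le hgrowth
  set w := fun i => (S.equivFin.symm i : Fin n)
  refine ⟨S.card, w, fun i => r * 4 ^ j (w i), fun i => ⟨Nat.le_mul_of_pos_right r (by positivity),
    ?_⟩, fun u => ?_, ?_⟩
  · rw [Nat.card_fin] at hjn
    push_cast
    rw [one_mul]
    exact mul_le_mul_of_nonneg_left (pow_le_rpow_of_pow_pow_le (by omega) hm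
      (inv_le_of_inv_le₀ hε (Nat.le_ceil _)) (hjn (w i))) (Nat.cast_nonneg r)
  · obtain ⟨x, hx, hxu⟩ := hcov u
    exact ⟨S.equivFin ⟨x, hx⟩, by simpa [w] using hxu⟩
  · rw [Equiv.sum_comp S.equivFin.symm (fun x => (gball G x (2 * (r * 4 ^ j x))).ncard),
      sum_coe_sort S fun x => (gball G x (2 * (r * 4 ^ j x))).ncard]
    rw [Nat.card_fin] at hsum
    exact_mod_cast hsum
end

section
/- For every real ε > 0 there exists a constant C(ε) > 0 such that for every integer n ≥ 2, every connected n-vertex graph G has a +⌈C(ε)·n^{1/2 + ε}⌉ additive emulator with at most C(ε)·n edges. -/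
open SimpleGraph

/-- The weighted distance in an emulator `H` with edge weights `w`:
the minimum total weight of a walk from `s` to `t` (`⊤` if none exists). -/
noncomputable def emulatorDist {V : Type*} (H : SimpleGraph V) (w : Sym2 V → ℕ)
    (s t : V) : ℕ∞ :=
  ⨅ p : H.Walk s t, ((p.edges.map w).sum : ℕ∞)

/-- `H` (with positive integer edge weights `w`) is a `+k` additive emulator of `G`:
for all vertices `s, t`, `dist_G(s,t) ≤ dist_H(s,t) ≤ dist_G(s,t) + k`. -/
def IsAdditiveEmulator {V : Type*} (G H : SimpleGraph V) (w : Sym2 V → ℕ)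
    (k : ℕ) : Prop :=
  (∀ e ∈ H.edgeSet, 0 < w e) ∧
  ∀ s t : V, (G.dist s t : ℕ∞) ≤ emulatorDist H w s t ∧
    emulatorDist H w s t ≤ (G.dist s t : ℕ∞) + (k : ℕ∞)

/-!
Take `D = ⌊√n⌋` and a maximal set `S` of vertices at pairwise distance `> 2D`. Maximality makes
`S` a `2D`-net, and the radius-`D` balls around `S` are disjoint and (when `|S| ≥ 2`) each contain
at least `D + 1` vertices, so `|S| ≤ √n`. The emulator joins all pairs in `S` and every vertex `v`
to a nearest net point `f v`, weighting each edge by its distance in `G`. It has at most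
`|S|² + n ≤ 2n` edges, never shortens distances (triangle inequality along the walk), and
routing `s → f s → f t → t` costs at most `dist s t + 8D`.
-/

open Finset

namespace SimpleGraph

variable {V : Type*} {G : SimpleGraph V}

lemma succ_le_card_filter_dist_le [Fintype V] [DecidableEq V] {s x : V} {r : ℕ}
    (hr : r < G.dist s x) : r + 1 ≤ #{v | G.dist s v ≤ r} := by
  obtain ⟨p, hp, hlen⟩ :=
    (Reachable.of_dist_ne_zero (by omega : G.dist s x ≠ 0)).exists_path_of_dist
  have hmaps :
      Set.MapsTo p.getVert (range (r + 1)) (({v | G.dist s v ≤ r} : Finset V) : Set V) := by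
    intro i hi
    simp only [coe_range, Set.mem_Iio] at hi
    simpa using (dist_le (p.take i)).trans (by rw [Walk.take_length]; omega)
  have hinj : Set.InjOn p.getVert (range (r + 1)) :=
    hp.getVert_injOn.mono fun i hi => by
      simp only [coe_range, Set.mem_Iio, Set.mem_ofPred_eq] at hi ⊢
      omega
  simpa using card_le_card_of_injOn p.getVert hmaps hinj

variable (G) in
lemma exists_pairwise_lt_dist_forall_exists_dist_le [Finite V] (d : ℕ) :
    ∃ S : Finset V, (S : Set V).Pairwise (fun a b => d < G.dist a b) ∧
      ∀ v, ∃ a ∈ S, G.dist v a ≤ d := by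
  classical
  obtain ⟨S, hS, hmax⟩ := Set.Finite.exists_maximal (Set.toFinite
    {T : Finset V | (T : Set V).Pairwise (fun a b => d < G.dist a b)}) ⟨∅, by simp⟩
  refine ⟨S, hS, fun v => ?_⟩
  by_contra! hfar
  have hv : v ∉ S := fun hv => by simpa using hfar v hv
  have hins : insert v S ∈ {T : Finset V | (T : Set V).Pairwise (fun a b => d < G.dist a b)} := by
    simp only [Set.mem_ofPred_eq, coe_insert]
    refine hS.insert fun a ha _ => ⟨hfar a ha, ?_⟩
    rw [dist_comm]
    exact hfar a ha
  exact hv (hmax hins (subset_insert v S) (mem_insert_self v S))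

lemma Connected.card_mul_succ_le_card_of_pairwise [Fintype V] (hG : G.Connected) {r : ℕ}
    (hr : r < Fintype.card V) {S : Finset V}
    (hS : (S : Set V).Pairwise (fun a b => 2 * r < G.dist a b)) :
    #S * (r + 1) ≤ Fintype.card V := by
  classical
  obtain hS1 | hS2 := le_or_gt #S 1
  · calc #S * (r + 1) ≤ 1 * (r + 1) := Nat.mul_le_mul_right _ hS1
      _ ≤ Fintype.card V := by omega
  have hball : ∀ s ∈ S, r + 1 ≤ #{v | G.dist s v ≤ r} := fun s hs => by
    obtain ⟨t, ht, hts⟩ := exists_mem_ne hS2 s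
    exact succ_le_card_filter_dist_le ((Nat.le_mul_of_pos_left r two_pos).trans_lt
      (hS hs ht hts.symm))
  have hdisj : (S : Set V).PairwiseDisjoint fun s => ({v | G.dist s v ≤ r} : Finset V) := by
    refine fun s hs t ht hst => Finset.disjoint_left.2 fun v hvs hvt => ?_
    simp only [mem_filter, mem_univ, true_and] at hvs hvt
    have := hG.dist_triangle (u := s) (v := v) (w := t)
    have := hS hs ht hst
    rw [dist_comm] at hvt
    omega
  calc #S * (r + 1) ≤ ∑ s ∈ S, #{v | G.dist s v ≤ r} := by
        simpa [mul_comm] using sum_le_sum hball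
    _ = #(S.biUnion fun s => {v | G.dist s v ≤ r}) := (card_biUnion hdisj).symm
    _ ≤ Fintype.card V := card_le_univ _

noncomputable def distWeight (G : SimpleGraph V) : Sym2 V → ℕ :=
  Sym2.lift ⟨G.dist, fun _ _ => dist_comm⟩

@[simp]
lemma distWeight_mk (u v : V) : G.distWeight s(u, v) = G.dist u v := rfl

lemma Connected.dist_le_sum_distWeight (hG : G.Connected) {H : SimpleGraph V} {s t : V}
    (p : H.Walk s t) : G.dist s t ≤ (p.edges.map G.distWeight).sum := by
  induction p with
  | nil => simp
  | @cons u v x _ q ih =>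
    calc G.dist u x ≤ G.dist u v + G.dist v x := hG.dist_triangle
      _ ≤ _ := by simpa using ih

lemma Connected.dist_le_emulatorDist (hG : G.Connected) (H : SimpleGraph V) (s t : V) :
    (G.dist s t : ℕ∞) ≤ emulatorDist H G.distWeight s t :=
  le_iInf fun p => Nat.cast_le.2 (hG.dist_le_sum_distWeight p)

lemma emulatorDist_self (H : SimpleGraph V) (w : Sym2 V → ℕ) (v : V) :
    emulatorDist H w v v = 0 :=
  nonpos_iff_eq_zero.1 (iInf_le_of_le Walk.nil (by simp))

lemma emulatorDist_le_of_adj {H : SimpleGraph V} (w : Sym2 V → ℕ) {u v : V} (h : H.Adj u v) :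
    emulatorDist H w u v ≤ w s(u, v) :=
  iInf_le_of_le (Walk.cons h Walk.nil) (by simp)

lemma emulatorDist_triangle (H : SimpleGraph V) (w : Sym2 V → ℕ) (u v x : V) :
    emulatorDist H w u x ≤ emulatorDist H w u v + emulatorDist H w v x :=
  ENat.le_iInf_add_iInf fun p q => iInf_le_of_le (p.append q) (by simp [Walk.edges_append])

lemma IsAdditiveEmulator.mono {H : SimpleGraph V} {w : Sym2 V → ℕ} {k l : ℕ}
    (h : IsAdditiveEmulator G H w k) (hkl : k ≤ l) : IsAdditiveEmulator G H w l :=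
  ⟨h.1, fun s t => ⟨(h.2 s t).1, (h.2 s t).2.trans (by gcongr)⟩⟩

def netEmulator (S : Finset V) (f : V → V) : SimpleGraph V :=
  fromEdgeSet (S.sym2 ∪ Set.range fun v => s(v, f v))

lemma emulatorDist_fromEdgeSet_distWeight_le {E : Set (Sym2 V)} {u v : V} (h : s(u, v) ∈ E) :
    emulatorDist (fromEdgeSet E) G.distWeight u v ≤ G.dist u v := by
  obtain rfl | huv := eq_or_ne u v
  · simp [emulatorDist_self]
  · simpa using emulatorDist_le_of_adj G.distWeight ((fromEdgeSet_adj _).2 ⟨h, huv⟩)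

lemma Connected.isAdditiveEmulator_netEmulator (hG : G.Connected) {S : Finset V} {f : V → V}
    {r : ℕ} (hfS : ∀ v, f v ∈ S) (hf : ∀ v, G.dist v (f v) ≤ r) :
    IsAdditiveEmulator G (netEmulator S f) G.distWeight (4 * r) := by
  refine ⟨fun e he => ?_, fun s t => ⟨hG.dist_le_emulatorDist _ s t, ?_⟩⟩
  · induction e using Sym2.ind with
    | _ u v => exact hG.pos_dist_of_ne ((fromEdgeSet_adj _).1 he).2
  · have hs : emulatorDist (netEmulator S f) G.distWeight s (f s) ≤ G.dist s (f s) :=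
      emulatorDist_fromEdgeSet_distWeight_le (Or.inr ⟨s, rfl⟩)
    have hst : emulatorDist (netEmulator S f) G.distWeight (f s) (f t) ≤ G.dist (f s) (f t) :=
      emulatorDist_fromEdgeSet_distWeight_le (Or.inl (mk_mem_sym2_iff.2 ⟨hfS s, hfS t⟩))
    have ht : emulatorDist (netEmulator S f) G.distWeight (f t) t ≤ G.dist (f t) t :=
      emulatorDist_fromEdgeSet_distWeight_le (Or.inr ⟨t, Sym2.eq_swap⟩)
    have hpath : G.dist s (f s) + G.dist (f s) (f t) + G.dist (f t) t ≤ G.dist s t + 4 * r := by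
      have hfs_ft := hG.dist_triangle (u := f s) (v := s) (w := f t)
      have hs_ft := hG.dist_triangle (u := s) (v := t) (w := f t)
      rw [dist_comm (u := f s) (v := s)] at hfs_ft
      rw [dist_comm (u := f t) (v := t)]
      have := hf s
      have := hf t
      omega
    calc emulatorDist (netEmulator S f) G.distWeight s t
        ≤ emulatorDist (netEmulator S f) G.distWeight s (f s) +
          (emulatorDist (netEmulator S f) G.distWeight (f s) (f t) +
          emulatorDist (netEmulator S f) G.distWeight (f t) t) :=
          (emulatorDist_triangle _ _ _ _ _).trans
            (by gcongr; exact emulatorDist_triangle _ _ _ _ _)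
      _ ≤ (G.dist s (f s) : ℕ∞) + (G.dist (f s) (f t) + G.dist (f t) t) := by gcongr
      _ ≤ G.dist s t + (4 * r : ℕ) := by rw [← add_assoc]; exact_mod_cast hpath

lemma ncard_edgeSet_netEmulator_le [Finite V] (S : Finset V) (f : V → V) :
    (netEmulator S f).edgeSet.ncard ≤ (#S + 1).choose 2 + Nat.card V := by
  rw [netEmulator, edgeSet_fromEdgeSet]
  calc _ ≤ ((S.sym2 : Set (Sym2 V)) ∪ Set.range fun v => s(v, f v)).ncard :=
        Set.ncard_le_ncard Set.sdiff_subset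
    _ ≤ (S.sym2 : Set (Sym2 V)).ncard + (Set.range fun v => s(v, f v)).ncard :=
        Set.ncard_union_le _ _
    _ ≤ _ := by
        rw [Set.ncard_coe_finset, card_sym2, ← Set.image_univ, ← Set.ncard_univ V]
        gcongr
        exact Set.ncard_image_le (Set.toFinite _)

end SimpleGraph

lemma Nat.sqrt_le_rpow (n : ℕ) {ε : ℝ} (hε : 0 ≤ ε) :
    (n.sqrt : ℝ) ≤ (n : ℝ) ^ (1 / 2 + ε) := by
  rcases n.eq_zero_or_pos with rfl | hn
  · simp [Real.rpow_nonneg]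
  calc (n.sqrt : ℝ) ≤ (n : ℝ) ^ (1 / 2 : ℝ) := by
        rw [← Real.sqrt_eq_rpow]; exact Real.nat_sqrt_le_real_sqrt
    _ ≤ (n : ℝ) ^ (1 / 2 + ε) :=
        Real.rpow_le_rpow_of_exponent_le (by exact_mod_cast hn) (by linarith)

lemma Nat.succ_choose_two_le_of_mul_sqrt_succ_le {k n : ℕ} (h : k * (n.sqrt + 1) ≤ n) :
    (k + 1).choose 2 ≤ n := by
  have hk : k ≤ n.sqrt := by
    by_contra!
    nlinarith [n.lt_succ_sqrt]
  calc (k + 1).choose 2 ≤ (k + 1) * k := by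
        rw [Nat.choose_two_right, Nat.add_sub_cancel]; exact Nat.div_le_self _ _
    _ ≤ (n.sqrt + 1) * k := by gcongr
    _ ≤ n := by rw [mul_comm]; exact h

theorem sqrt_error_emulator :
    ∀ ε : ℝ, 0 < ε → ∃ C : ℝ, 0 < C ∧
      ∀ n : ℕ, 2 ≤ n → ∀ G : SimpleGraph (Fin n), G.Connected →
        ∃ (H : SimpleGraph (Fin n)) (w : Sym2 (Fin n) → ℕ),
          IsAdditiveEmulator G H w ⌈C * (n : ℝ) ^ (1 / 2 + ε)⌉₊ ∧
          (H.edgeSet.ncard : ℝ) ≤ C * n := by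
  intro ε hε
  refine ⟨8, by norm_num, fun n hn G hG => ?_⟩
  set D := n.sqrt
  obtain ⟨S, hSsep, hScov⟩ := G.exists_pairwise_lt_dist_forall_exists_dist_le (2 * D)
  choose f hfS hf using hScov
  have hSD : #S * (D + 1) ≤ n := by
    simpa using hG.card_mul_succ_le_card_of_pairwise (by simpa using Nat.sqrt_lt_self hn) hSsep
  have hSS : (#S + 1).choose 2 ≤ n := Nat.succ_choose_two_le_of_mul_sqrt_succ_le hSD
  refine ⟨netEmulator S f, G.distWeight, (hG.isAdditiveEmulator_netEmulator hfS hf).mono ?_, ?_⟩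
  · have : ((4 * (2 * D) : ℕ) : ℝ) ≤ 8 * (n : ℝ) ^ (1 / 2 + ε) := by
      push_cast; nlinarith [n.sqrt_le_rpow hε.le]
    exact_mod_cast this.trans (Nat.le_ceil _)
  · have := ncard_edgeSet_netEmulator_le S f
    simp only [Nat.card_eq_fintype_card, Fintype.card_fin] at this
    have : (netEmulator S f).edgeSet.ncard ≤ 8 * n := by omega
    exact_mod_cast this
end
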